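/- Refutation soundness: if the refute judgment holds for location loc and error condition σ̂ (i.e., there is an inductive invariant Σ̂ with the error state entailing Σ̂ at loc, and Σ̂ at the framework location excludes the initial state), and σ' steps in zero or more steps to σ with σ ⊨_S σ̂ and Ω ⊆ Ω_S, then σ' is not the initial program state. -/
import Mathlib


/-- Refutation soundness: given a backward-inductive invariant `inv` for
program `p`, an error condition `err` at location `l` entailing `inv l`,
and `inv fwk` excluding the initial state, no state satisfying the error
condition is reachable from the initial state. -/
theorem refute_sound {Trans CState AState Loc : Type}
    (p : Set Trans) (step : Trans → CState → CState → Prop)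
    (loc : CState → Loc) (inv : Loc → AState)
    (Sat : CState → AState → Prop)
    (fwk : Loc) (σinit : CState) (hinitloc : loc σinit = fwk)
    (hind : ∀ t ∈ p, ∀ σ' σ : CState, step t σ' σ →
      Sat σ (inv (loc σ)) → Sat σ' (inv (loc σ')))
    (err : AState) (l : Loc)
    (herr : ∀ σc : CState, loc σc = l → Sat σc err → Sat σc (inv l))
    (hnotinit : ¬ Sat σinit (inv fwk))
    (σ' σ : CState)
    (hsteps : Relation.ReflTransGen (fun a b => ∃ t ∈ p, step t a b) σ' σ)
    (hloc : loc σ = l) (hsat : Sat σ err) :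
    σ' ≠ σinit := by
  have key : Sat σ' (inv (loc σ')) := by
    have base : Sat σ (inv (loc σ)) := by
      rw [hloc]; exact herr σ hloc hsat
    clear hloc hsat
    induction hsteps using Relation.ReflTransGen.head_induction_on with
    | refl => exact base
    | head h _ ih =>
      obtain ⟨t, ht, hstep⟩ := h
      exact hind t ht _ _ hstep ih
  rintro rfl
  rw [hinitloc] at key
  exact hnotinit key
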